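/- The number of permutations π of {1,...,n+1} satisfying (for all 1 ≤ a < b ≤ n: π⁻¹(b) ≤ a implies π⁻¹(a+1) ≤ b) equals the n-th large Schröder number r_n; and the number of such permutations additionally satisfying π⁻¹(n+1) < π⁻¹(1) equals the n-th small Schröder number s_n = r_n / 2. -/

import Mathlib

/-!
Put `P = π⁻¹(b)` and `Q = π⁻¹(a + 1)`: the condition fails exactly when `P < π Q < π P < Q`
for some positions `P, Q`; call `π` smooth when this never happens. Sort the smooth permutations
of `{1, ..., m}` by `π 1 = v + 1`. For `v = 0`, `π = 1 ⊕ π'` with `π'` smooth of size `m - 1`.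
For `v ≥ 1`, smoothness at `(1, Q)` forces the values `2, ..., v` onto the positions
`2, ..., v + 1`. These positions then carry a smooth permutation of size `v` (the one position with
a foreign value playing the role of its maximum `v`), and that position together with
`v + 2, ..., m` carries a smooth permutation of size `m - v`. Hence the counts `c m` satisfy
`c (n + 1) = c n + ∑_{k < n} c (k + 1) * c (n - k)`, which is the Schröder recursion for
`r n = c (n + 1)`.

Exchanging the values `1` and `m` maps smooth permutations to smooth permutations (these values
can never be `π P` or `π Q` above) and swaps the positions of `1` and `m`, so exactly half of the
smooth permutations have `π⁻¹(m) < π⁻¹(1)`.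
-/

/-- The extended chain: `E S 0 = ∅`, `E S m = S m` for `1 ≤ m ≤ n`, and
`E S m = {1, ..., n+1}` for `m > n`. -/
def extColl (n : ℕ) (S : ℕ → Finset ℕ) (m : ℕ) : Finset ℕ :=
  if m = 0 then ∅ else if m ≤ n then S m else Finset.Icc 1 (n + 1)

/-- The permutation attached to a smooth collection: `π(m)` is the unique element of
`S m \ S (m-1)` (realized as the sum over the singleton difference), and `0` outside
`{1, ..., n+1}`. -/
def piOf (n : ℕ) (S : ℕ → Finset ℕ) (m : ℕ) : ℕ :=
  if 1 ≤ m ∧ m ≤ n + 1 then ∑ x ∈ extColl n S m \ extColl n S (m - 1), x else 0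

/-- Permutations `π` of `{1, ..., n+1}` (extended by `0` elsewhere) such that for all
`1 ≤ a < b ≤ n`, `π⁻¹(b) ≤ a` implies `π⁻¹(a+1) ≤ b`. -/
def GoodPerm (n : ℕ) (p : ℕ → ℕ) : Prop :=
  Set.BijOn p (Set.Icc 1 (n + 1)) (Set.Icc 1 (n + 1)) ∧
  (∀ m, m ∉ Set.Icc 1 (n + 1) → p m = 0) ∧
  (∀ a b, 1 ≤ a → a < b → b ≤ n →
    (∃ x, 1 ≤ x ∧ x ≤ a ∧ p x = b) → (∃ y, 1 ≤ y ∧ y ≤ b ∧ p y = a + 1))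

def PermOn (m : ℕ) (p : ℕ → ℕ) : Prop :=
  Set.BijOn p (Set.Icc 1 m) (Set.Icc 1 m) ∧ ∀ x ∉ Set.Icc 1 m, p x = 0

def IsSmooth (p : ℕ → ℕ) : Prop := ∀ P Q, ¬ (P < p Q ∧ p Q < p P ∧ p P < Q)

def smoothPerms (m : ℕ) : Set (ℕ → ℕ) := {p | PermOn m p ∧ IsSmooth p}

namespace PermOn

variable {m : ℕ} {p : ℕ → ℕ}

lemma apply_mem_Icc (h : PermOn m p) {x : ℕ} (hx : 1 ≤ x) (hxm : x ≤ m) :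
    1 ≤ p x ∧ p x ≤ m :=
  h.1.mapsTo ⟨hx, hxm⟩

lemma apply_eq_zero (h : PermOn m p) {x : ℕ} (hx : ¬ (1 ≤ x ∧ x ≤ m)) : p x = 0 :=
  h.2 x hx

lemma mem_Icc_of_apply_ne_zero (h : PermOn m p) {x : ℕ} (hx : p x ≠ 0) : 1 ≤ x ∧ x ≤ m := by
  by_contra hx'
  exact hx (h.apply_eq_zero hx')

lemma apply_le (h : PermOn m p) (x : ℕ) : p x ≤ m := by
  by_cases hx : 1 ≤ x ∧ x ≤ m
  · exact (h.apply_mem_Icc hx.1 hx.2).2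
  · simp [h.apply_eq_zero hx]

lemma inj (h : PermOn m p) {x y : ℕ} (hx : 1 ≤ x) (hxm : x ≤ m) (hy : 1 ≤ y) (hym : y ≤ m)
    (hxy : p x = p y) : x = y :=
  h.1.injOn ⟨hx, hxm⟩ ⟨hy, hym⟩ hxy

lemma exists_apply_eq (h : PermOn m p) {y : ℕ} (hy : 1 ≤ y) (hym : y ≤ m) :
    ∃ x, 1 ≤ x ∧ x ≤ m ∧ p x = y := by
  obtain ⟨x, hx, rfl⟩ := h.1.surjOn ⟨hy, hym⟩
  exact ⟨x, hx.1, hx.2, rfl⟩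

lemma of_surjOn (hmaps : ∀ x, 1 ≤ x → x ≤ m → 1 ≤ p x ∧ p x ≤ m)
    (hsurj : ∀ y, 1 ≤ y → y ≤ m → ∃ x, 1 ≤ x ∧ x ≤ m ∧ p x = y)
    (hzero : ∀ x, ¬ (1 ≤ x ∧ x ≤ m) → p x = 0) : PermOn m p := by
  have hmapsTo : Set.MapsTo p (Set.Icc 1 m) (Set.Icc 1 m) := fun x hx => hmaps x hx.1 hx.2
  refine ⟨(Set.finite_Icc 1 m).surjOn_iff_bijOn_of_mapsTo hmapsTo |>.1 fun y hy => ?_, hzero⟩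
  obtain ⟨x, hx, hxm, rfl⟩ := hsurj y hy.1 hy.2
  exact ⟨x, ⟨hx, hxm⟩, rfl⟩

lemma of_injOn (hmaps : ∀ x, 1 ≤ x → x ≤ m → 1 ≤ p x ∧ p x ≤ m)
    (hinj : ∀ x y, 1 ≤ x → x ≤ m → 1 ≤ y → y ≤ m → p x = p y → x = y)
    (hzero : ∀ x, ¬ (1 ≤ x ∧ x ≤ m) → p x = 0) : PermOn m p := by
  have hmapsTo : Set.MapsTo p (Set.Icc 1 m) (Set.Icc 1 m) := fun x hx => hmaps x hx.1 hx.2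
  exact ⟨(Set.finite_Icc 1 m).injOn_iff_bijOn_of_mapsTo hmapsTo |>.1
    fun x hx y hy => hinj x y hx.1 hx.2 hy.1 hy.2, hzero⟩

lemma eq_of_eqOn_two_le {p' : ℕ → ℕ} (h : PermOn m p) (h' : PermOn m p')
    (hpp' : ∀ x, 2 ≤ x → x ≤ m → p x = p' x) : p = p' := by
  funext x
  by_cases hx : 1 ≤ x ∧ x ≤ m
  · rcases (show x = 1 ∨ 2 ≤ x by omega) with rfl | hx2
    · have hp1 := h.apply_mem_Icc le_rfl hx.2
      obtain ⟨y, hy, hym, hpy⟩ := h'.exists_apply_eq hp1.1 hp1.2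
      rcases (show y = 1 ∨ 2 ≤ y by omega) with rfl | hy2
      · exact hpy.symm
      · have := h.inj le_rfl hx.2 hy hym (by rw [hpp' y hy2 hym, hpy])
        omega
    · exact hpp' x hx2 hx.2
  · rw [h.apply_eq_zero hx, h'.apply_eq_zero hx]

end PermOn

lemma smoothPerms_finite (m : ℕ) : (smoothPerms m).Finite := by
  refine (Set.finite_range fun (f : Fin (m + 1) → Fin (m + 1)) (x : ℕ) =>
    if hx : x < m + 1 then (f ⟨x, hx⟩ : ℕ) else 0).subset fun p hp => ?_
  refine ⟨fun i => ⟨p i, Nat.lt_succ_of_le (hp.1.apply_le i)⟩, funext fun x => ?_⟩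
  by_cases hx : x < m + 1
  · simp [hx]
  · simp [hx, hp.1.apply_eq_zero (show ¬ (1 ≤ x ∧ x ≤ m) by omega)]

lemma goodPerm_iff_mem_smoothPerms {n : ℕ} {p : ℕ → ℕ} :
    GoodPerm n p ↔ p ∈ smoothPerms (n + 1) := by
  constructor
  · rintro ⟨hbij, hzero, hgood⟩
    have hp : PermOn (n + 1) p := ⟨hbij, hzero⟩
    refine ⟨hp, fun P Q ⟨h1, h2, h3⟩ => ?_⟩
    have hQ := hp.mem_Icc_of_apply_ne_zero (x := Q) (by omega)
    have hP := hp.mem_Icc_of_apply_ne_zero (x := P) (by omega)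
    obtain ⟨y, hy, hyb, hpy⟩ := hgood (p Q - 1) (p P) (by omega) (by omega) (by omega)
      ⟨P, by omega, by omega, rfl⟩
    have := hp.inj hy (by omega) hQ.1 hQ.2 (by omega)
    omega
  · rintro ⟨hp, hsmooth⟩
    refine ⟨hp.1, hp.2, fun a b ha hab hbn ⟨x, hx, hxa, hpx⟩ => ?_⟩
    obtain ⟨y, hy, hyn, hpy⟩ := hp.exists_apply_eq (y := a + 1) (by omega) (by omega)
    refine ⟨y, hy, ?_, hpy⟩
    by_contra hyb
    have hne : p x ≠ p y := fun h => by
      have := hp.inj hx (by omega) hy hyn h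
      omega
    exact hsmooth x y ⟨by omega, by omega, by omega⟩

lemma Set.Finite.ncard_eq_sum_ncard_fiber {α : Type*} {S : Set α} (hS : S.Finite) {f : α → ℕ}
    {k : ℕ} (hf : ∀ x ∈ S, f x < k) :
    S.ncard = ∑ v ∈ Finset.range k, {x ∈ S | f x = v}.ncard := by
  rw [Set.ncard_eq_toFinset_card S hS, Finset.card_eq_sum_card_fiberwise (t := Finset.range k)
    fun x hx => by simpa using hf x (by simpa using hx)]
  refine Finset.sum_congr rfl fun v _ => ?_
  rw [← Set.ncard_coe_finset]
  congr 1
  ext x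
  simp

def firstClass (m v : ℕ) : Set (ℕ → ℕ) := {p ∈ smoothPerms m | p 1 = v + 1}

lemma ncard_smoothPerms_eq_sum {m : ℕ} (hm : 1 ≤ m) :
    (smoothPerms m).ncard = ∑ v ∈ Finset.range m, (firstClass m v).ncard := by
  rw [(smoothPerms_finite m).ncard_eq_sum_ncard_fiber (f := fun p => p 1 - 1)
    fun p hp => show p 1 - 1 < m by have := hp.1.apply_mem_Icc le_rfl hm; omega]
  refine Finset.sum_congr rfl fun v _ =>
    congrArg _ (Set.ext fun p => and_congr_right fun hp => ?_)
  have := hp.1.apply_mem_Icc le_rfl hm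
  omega

/-- `1 ⊕ p`. -/
def consOne (m : ℕ) (p : ℕ → ℕ) (x : ℕ) : ℕ :=
  if x = 1 then 1 else if 2 ≤ x ∧ x ≤ m + 1 then p (x - 1) + 1 else 0

def shiftDown (q : ℕ → ℕ) (x : ℕ) : ℕ := q (x + 1) - 1

section consOne

variable {m : ℕ} {p q : ℕ → ℕ}

lemma permOn_consOne (hp : PermOn m p) : PermOn (m + 1) (consOne m p) := by
  refine .of_injOn (fun x hx hxm => ?_) (fun x y hx hxm hy hym hxy => ?_) (fun x hx => ?_)
  · have := hp.apply_mem_Icc (x := x - 1)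
    unfold consOne
    split_ifs <;> omega
  · have := hp.apply_mem_Icc (x := x - 1)
    have := hp.apply_mem_Icc (x := y - 1)
    have := hp.inj (x := x - 1) (y := y - 1)
    unfold consOne at hxy
    split_ifs at hxy <;> omega
  · unfold consOne
    split_ifs <;> omega

lemma isSmooth_consOne (hp : IsSmooth p) : IsSmooth (consOne m p) := by
  rintro P Q ⟨h1, h2, h3⟩
  apply hp (P - 1) (Q - 1)
  unfold consOne at h1 h2 h3
  split_ifs at h1 h2 h3 <;> omega

lemma consOne_mem_firstClass (hp : p ∈ smoothPerms m) : consOne m p ∈ firstClass (m + 1) 0 :=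
  ⟨⟨permOn_consOne hp.1, isSmooth_consOne hp.2⟩, by simp [consOne]⟩

lemma shiftDown_mem_smoothPerms (hq : q ∈ firstClass (m + 1) 0) :
    shiftDown q ∈ smoothPerms m := by
  obtain ⟨⟨hperm, hsmooth⟩, hq1⟩ := hq
  have hval : ∀ x, 1 ≤ x → x ≤ m → 2 ≤ q (x + 1) ∧ q (x + 1) ≤ m + 1 := fun x hx hxm => by
    have := hperm.apply_mem_Icc (x := x + 1) (by omega) (by omega)
    have := hperm.inj (x := x + 1) (y := 1) (by omega) (by omega) le_rfl (by omega)
    omega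
  refine ⟨.of_injOn (fun x hx hxm => ?_) (fun x y hx hxm hy hym hxy => ?_) (fun x hx => ?_), ?_⟩
  · have := hval x hx hxm
    simp only [shiftDown]
    omega
  · have := hval x hx hxm
    have := hval y hy hym
    have := hperm.inj (x := x + 1) (y := y + 1) (by omega) (by omega) (by omega) (by omega)
    simp only [shiftDown] at hxy
    omega
  · rcases Nat.eq_zero_or_pos x with rfl | hx0
    · simp [shiftDown, hq1]
    · simp [shiftDown, hperm.apply_eq_zero (x := x + 1) (by omega)]
  · rintro P Q ⟨h1, h2, h3⟩
    simp only [shiftDown] at h1 h2 h3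
    exact hsmooth (P + 1) (Q + 1) ⟨by omega, by omega, by omega⟩

lemma ncard_firstClass_zero (m : ℕ) :
    (firstClass (m + 1) 0).ncard = (smoothPerms m).ncard := by
  refine (Set.InvOn.bijOn ⟨fun p hp => funext fun x => ?_, fun q hq => funext fun x => ?_⟩
    (fun p hp => consOne_mem_firstClass hp)
    (fun q hq => shiftDown_mem_smoothPerms hq)).ncard_eq.symm
  · have := hp.1.apply_eq_zero (x := x)
    simp only [shiftDown, consOne, Nat.add_sub_cancel]
    split_ifs <;> omega
  · simp only [shiftDown, consOne]
    split_ifs with h1 h2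
    · rw [h1, hq.2]
    · have := hq.1.1.apply_mem_Icc (by omega) h2.2
      rw [Nat.sub_add_cancel (by omega : 1 ≤ x)]
      omega
    · exact (hq.1.1.apply_eq_zero (by omega)).symm

end consOne

/-- Moves the values `2, ..., k` of `ω` past the values `2, ..., v + 1` taken on the block. -/
def liftPast (v y : ℕ) : ℕ := if y = 1 then 1 else y + v

def unliftPast (v y : ℕ) : ℕ := if y = 1 then 1 else y - v

/-- The permutation of `{1, ..., v + k}` sending `1` to `v + 1` that is built from `τ` of size `v`
and `ω` of size `k`: the positions `2, ..., v + 1` carry `τ` shifted up by one, except that the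
position where `τ` takes its maximum `v` carries `ω 1` instead; the positions `v + 2, ..., v + k`
carry the remaining values of `ω`. -/
def glue (v k : ℕ) (τ ω : ℕ → ℕ) (x : ℕ) : ℕ :=
  if x = 1 then v + 1
  else if 2 ≤ x ∧ x ≤ v + 1 then (if τ (x - 1) = v then liftPast v (ω 1) else τ (x - 1) + 1)
  else if v + 2 ≤ x ∧ x ≤ v + k then liftPast v (ω (x - v))
  else 0

section glue

variable {v k : ℕ} {τ ω : ℕ → ℕ}

lemma permOn_glue (hv : 1 ≤ v) (hk : 1 ≤ k) (hτ : PermOn v τ) (hω : PermOn k ω) :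
    PermOn (v + k) (glue v k τ ω) := by
  refine .of_surjOn (fun x hx hxm => ?_) (fun y hy hym => ?_) (fun x hx => ?_)
  · have := hτ.apply_mem_Icc (x := x - 1)
    have := hω.apply_mem_Icc (x := x - v)
    have := hω.apply_mem_Icc (x := 1) le_rfl hk
    unfold glue liftPast
    split_ifs <;> omega
  · rcases (show y = v + 1 ∨ (2 ≤ y ∧ y ≤ v) ∨ y = 1 ∨ v + 2 ≤ y by omega) with
      rfl | hyτ | hyω | hyω
    · exact ⟨1, le_rfl, by omega, by simp [glue]⟩
    · obtain ⟨i, hi, hiv, hτi⟩ := hτ.exists_apply_eq (y := y - 1) (by omega) (by omega)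
      refine ⟨i + 1, by omega, by omega, ?_⟩
      simp only [glue, Nat.add_sub_cancel, hτi]
      split_ifs <;> omega
    all_goals
      obtain ⟨j, hj, hjk, hωj⟩ := hω.exists_apply_eq (y := unliftPast v y)
        (by unfold unliftPast; split_ifs <;> omega) (by unfold unliftPast; split_ifs <;> omega)
      rcases (show j = 1 ∨ 2 ≤ j by omega) with rfl | hj2
      · obtain ⟨i, hi, hiv, hτi⟩ := hτ.exists_apply_eq (y := v) (by omega) le_rfl
        refine ⟨i + 1, by omega, by omega, ?_⟩
        simp only [glue, Nat.add_sub_cancel, hτi, hωj, liftPast, unliftPast]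
        split_ifs <;> omega
      · refine ⟨v + j, by omega, by omega, ?_⟩
        simp only [glue, Nat.add_sub_cancel_left, hωj, liftPast, unliftPast]
        split_ifs <;> omega
  · unfold glue
    split_ifs <;> omega

lemma isSmooth_glue (hk : 1 ≤ k) (hτ : PermOn v τ) (hω : PermOn k ω) (hτs : IsSmooth τ)
    (hωs : IsSmooth ω) : IsSmooth (glue v k τ ω) := by
  rintro P Q ⟨h1, h2, h3⟩
  -- A crossing of the glued permutation is either a crossing of `τ` inside the block, or a
  -- crossing of `ω` among the slot (as position `1`) and the tail.
  have := hτ.apply_mem_Icc (x := P - 1)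
  have := hω.apply_mem_Icc (x := Q - v)
  have := hω.apply_mem_Icc (x := 1) le_rfl hk
  have := hτs (P - 1) (Q - 1)
  have := hωs (P - v) (Q - v)
  have := hωs 1 (Q - v)
  unfold glue liftPast at h1 h2 h3
  split_ifs at h1 h2 h3 <;> omega

lemma glue_mem_firstClass (hv : 1 ≤ v) (hk : 1 ≤ k) (hτ : τ ∈ smoothPerms v)
    (hω : ω ∈ smoothPerms k) : glue v k τ ω ∈ firstClass (v + k) v :=
  ⟨⟨permOn_glue hv hk hτ.1 hω.1, isSmooth_glue hk hτ.1 hω.1 hτ.2 hω.2⟩, by simp [glue]⟩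

end glue

def IsSlot (v : ℕ) (q : ℕ → ℕ) (s : ℕ) : Prop := 2 ≤ s ∧ s ≤ v + 1 ∧ ¬ (2 ≤ q s ∧ q s ≤ v)

/-- The two components of `q = glue v k τ ω`; `unglueRight` reads `ω 1` off the slot `s` of `q`. -/
def unglueLeft (v : ℕ) (q : ℕ → ℕ) (i : ℕ) : ℕ :=
  if 1 ≤ i ∧ i ≤ v then (if 2 ≤ q (i + 1) ∧ q (i + 1) ≤ v then q (i + 1) - 1 else v) else 0

def unglueRight (v k s : ℕ) (q : ℕ → ℕ) (j : ℕ) : ℕ :=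
  if j = 1 then unliftPast v (q s) else if 2 ≤ j ∧ j ≤ k then unliftPast v (q (v + j)) else 0

namespace firstClass

variable {m v k : ℕ} {q : ℕ → ℕ}

lemma pos_le_of_val_le (hq : q ∈ firstClass m v) {x : ℕ} (hx2 : 2 ≤ q x) (hxv : q x ≤ v) :
    2 ≤ x ∧ x ≤ v + 1 := by
  obtain ⟨⟨hperm, hsmooth⟩, hq1⟩ := hq
  have := hperm.mem_Icc_of_apply_ne_zero (x := x) (by omega)
  have := hsmooth 1 x
  have : x ≠ 1 := by
    rintro rfl
    omega
  omega

lemma apply_eq_one_or_gt (hq : q ∈ firstClass m v) {x : ℕ} (hx : 2 ≤ x) (hxm : x ≤ m)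
    (hqx : ¬ (2 ≤ q x ∧ q x ≤ v)) : q x = 1 ∨ v + 2 ≤ q x ∧ q x ≤ m := by
  have := hq.1.1.apply_mem_Icc (x := x) (by omega) hxm
  have := hq.1.1.inj (x := x) (y := 1) (by omega) hxm le_rfl (by omega)
  have := hq.2
  omega

lemma apply_tail_eq_one_or_gt (hq : q ∈ firstClass m v) {x : ℕ} (hx : v + 2 ≤ x) (hxm : x ≤ m) :
    q x = 1 ∨ v + 2 ≤ q x ∧ q x ≤ m :=
  apply_eq_one_or_gt hq (by omega) hxm fun h => by have := pos_le_of_val_le hq h.1 h.2; omega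

lemma exists_isSlot (hv : 1 ≤ v) (hk : 1 ≤ k) (hq : q ∈ firstClass (v + k) v) :
    ∃ s, IsSlot v q s := by
  by_contra! h
  obtain ⟨x, hx, y, hy, hxy, hqxy⟩ := Finset.exists_ne_map_eq_of_card_lt_of_maps_to
    (s := Finset.Icc 2 (v + 1)) (t := Finset.Icc 2 v) (by simp; omega) (f := q) fun x hx => by
      simp only [Finset.coe_Icc, Set.mem_Icc] at hx ⊢
      by_contra hqx
      exact h x ⟨hx.1, hx.2, hqx⟩
  simp only [Finset.mem_Icc] at hx hy
  exact hxy (hq.1.1.inj (by omega) (by omega) (by omega) (by omega) hqxy)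

lemma permOn_unglueLeft (hv : 1 ≤ v) (hk : 1 ≤ k) (hq : q ∈ firstClass (v + k) v) :
    PermOn v (unglueLeft v q) := by
  refine .of_surjOn (fun i hi hiv => ?_) (fun y hy hyv => ?_) (fun i hi => ?_)
  · unfold unglueLeft
    split_ifs <;> omega
  · rcases (show y < v ∨ y = v by omega) with hy | rfl
    · obtain ⟨x, hx, hxm, hqx⟩ := hq.1.1.exists_apply_eq (y := y + 1) (by omega) (by omega)
      have := pos_le_of_val_le hq (x := x) (by omega) (by omega)
      refine ⟨x - 1, by omega, by omega, ?_⟩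
      simp only [unglueLeft, Nat.sub_add_cancel (by omega : 1 ≤ x), hqx]
      split_ifs <;> omega
    · obtain ⟨s, hs2, hsv, hs⟩ := exists_isSlot hv hk hq
      refine ⟨s - 1, by omega, by omega, ?_⟩
      simp only [unglueLeft, Nat.sub_add_cancel (by omega : 1 ≤ s)]
      rw [if_pos (by omega), if_neg hs]
  · simp only [unglueLeft, if_neg hi]

lemma isSmooth_unglueLeft (hq : q ∈ firstClass m v) : IsSmooth (unglueLeft v q) := by
  rintro i j ⟨h1, h2, h3⟩
  have := hq.1.2 (i + 1) (j + 1)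
  unfold unglueLeft at h1 h2 h3
  split_ifs at h1 h2 h3 <;> omega

/-- The slot is unique, since `unglueLeft v q` takes the value `v` at `s - 1` for every slot `s`. -/
lemma isSlot_unique (hv : 1 ≤ v) (hk : 1 ≤ k) (hq : q ∈ firstClass (v + k) v) {s x : ℕ}
    (hs : IsSlot v q s) (hx : IsSlot v q x) : x = s := by
  obtain ⟨hs2, hsv, hs⟩ := hs
  obtain ⟨hx2, hxv, hx⟩ := hx
  have := (permOn_unglueLeft hv hk hq).inj (x := x - 1) (y := s - 1) (by omega) (by omega)
    (by omega) (by omega)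
  simp only [unglueLeft, Nat.sub_add_cancel (by omega : 1 ≤ x),
    Nat.sub_add_cancel (by omega : 1 ≤ s)] at this
  split_ifs at this <;> omega

lemma permOn_unglueRight (hk : 1 ≤ k) (hq : q ∈ firstClass (v + k) v) {s : ℕ}
    (hs : IsSlot v q s) : PermOn k (unglueRight v k s q) := by
  obtain ⟨hs2, hsv, hqs⟩ := hs
  have := apply_eq_one_or_gt hq hs2 (by omega) hqs
  have htail (j : ℕ) := apply_tail_eq_one_or_gt hq (x := v + j)
  refine .of_injOn (fun i hi hik => ?_) (fun i j hi hik hj hjk hij => ?_) (fun j hj => ?_)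
  · have := htail i
    unfold unglueRight unliftPast
    split_ifs <;> omega
  · have := htail i
    have := htail j
    have := hq.1.1.inj (x := s) (y := v + j)
    have := hq.1.1.inj (x := v + i) (y := s)
    have := hq.1.1.inj (x := v + i) (y := v + j)
    unfold unglueRight unliftPast at hij
    split_ifs at hij <;> omega
  · unfold unglueRight
    split_ifs <;> omega

lemma isSmooth_unglueRight (hk : 1 ≤ k) (hq : q ∈ firstClass (v + k) v) {s : ℕ}
    (hs : IsSlot v q s) : IsSmooth (unglueRight v k s q) := by
  obtain ⟨hs2, hsv, hqs⟩ := hs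
  have := apply_eq_one_or_gt hq hs2 (by omega) hqs
  have htail (j : ℕ) := apply_tail_eq_one_or_gt hq (x := v + j)
  rintro i j ⟨h1, h2, h3⟩
  have := htail i
  have := htail j
  have := hq.1.2 s (v + j)
  have := hq.1.2 (v + i) (v + j)
  unfold unglueRight unliftPast at h1 h2 h3
  split_ifs at h1 h2 h3 <;> omega

lemma glue_unglueLeft_unglueRight (hv : 1 ≤ v) (hk : 1 ≤ k) (hq : q ∈ firstClass (v + k) v) {s : ℕ}
    (hs : IsSlot v q s) : glue v k (unglueLeft v q) (unglueRight v k s q) = q := by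
  have hslot := apply_eq_one_or_gt hq hs.1 (by have := hs.2.1; omega) hs.2.2
  funext x
  rcases (show x = 1 ∨ (2 ≤ x ∧ x ≤ v + 1) ∨ (v + 2 ≤ x ∧ x ≤ v + k) ∨ ¬ (1 ≤ x ∧ x ≤ v + k)
    by omega) with rfl | hx | hx | hx
  · simp [glue, hq.2]
  · simp only [glue, unglueLeft, Nat.sub_add_cancel (by omega : 1 ≤ x)]
    by_cases hqx : 2 ≤ q x ∧ q x ≤ v
    · simp only [if_pos hqx]
      split_ifs <;> omega
    · obtain rfl := isSlot_unique hv hk hq hs ⟨hx.1, hx.2, hqx⟩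
      simp only [unglueRight, liftPast, unliftPast]
      split_ifs <;> omega
  · have := apply_tail_eq_one_or_gt hq hx.1 hx.2
    simp only [glue, unglueRight, liftPast, unliftPast, Nat.add_sub_cancel' (by omega : v ≤ x)]
    split_ifs <;> omega
  · simp only [glue]
    split_ifs <;> first | omega | exact (hq.1.1.apply_eq_zero hx).symm

end firstClass

section decomposition

variable {v k : ℕ}

lemma unglueLeft_glue (hk : 1 ≤ k) {τ ω : ℕ → ℕ} (hτ : PermOn v τ) (hω : PermOn k ω) :
    unglueLeft v (glue v k τ ω) = τ := by
  funext i
  have := hτ.apply_mem_Icc (x := i)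
  have := hτ.apply_eq_zero (x := i)
  have := hω.apply_mem_Icc (x := 1) le_rfl hk
  simp only [unglueLeft, glue, liftPast, Nat.add_sub_cancel]
  split_ifs <;> omega

lemma glue_injOn (hk : 1 ≤ k) : Set.InjOn (fun τω : (ℕ → ℕ) × (ℕ → ℕ) => glue v k τω.1 τω.2)
    (smoothPerms v ×ˢ smoothPerms k) := by
  rintro ⟨τ, ω⟩ ⟨hτ, hω⟩ ⟨τ', ω'⟩ ⟨hτ', hω'⟩ h
  simp only at hτ hω hτ' hω' h ⊢
  refine Prod.ext (show τ = τ' from ?_)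
    (show ω = ω' from hω.1.eq_of_eqOn_two_le hω'.1 fun j hj hjk => ?_)
  · rw [← unglueLeft_glue hk hτ.1 hω.1, h, unglueLeft_glue hk hτ'.1 hω'.1]
  · have hj := congrFun h (v + j)
    have := hω.1.apply_mem_Icc (x := j) (by omega) hjk
    have := hω'.1.apply_mem_Icc (x := j) (by omega) hjk
    simp only [glue, liftPast, Nat.add_sub_cancel_left] at hj
    split_ifs at hj <;> omega

lemma image_glue (hv : 1 ≤ v) (hk : 1 ≤ k) :
    (fun τω : (ℕ → ℕ) × (ℕ → ℕ) => glue v k τω.1 τω.2) '' (smoothPerms v ×ˢ smoothPerms k) =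
      firstClass (v + k) v := by
  refine Set.Subset.antisymm ?_ fun q hq => ?_
  · rintro _ ⟨⟨τ, ω⟩, ⟨hτ, hω⟩, rfl⟩
    exact glue_mem_firstClass hv hk hτ hω
  · obtain ⟨s, hs⟩ := firstClass.exists_isSlot hv hk hq
    exact ⟨(unglueLeft v q, unglueRight v k s q),
      ⟨⟨firstClass.permOn_unglueLeft hv hk hq, firstClass.isSmooth_unglueLeft hq⟩,
        ⟨firstClass.permOn_unglueRight hk hq hs, firstClass.isSmooth_unglueRight hk hq hs⟩⟩,
      firstClass.glue_unglueLeft_unglueRight hv hk hq hs⟩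

lemma ncard_firstClass (hv : 1 ≤ v) (hk : 1 ≤ k) :
    (firstClass (v + k) v).ncard = (smoothPerms v).ncard * (smoothPerms k).ncard := by
  rw [← image_glue hv hk, (glue_injOn hk).ncard_image, Set.ncard_prod]

end decomposition

lemma ncard_smoothPerms_zero : (smoothPerms 0).ncard = 1 := by
  refine Set.ncard_eq_one.2 ⟨0, Set.ext fun p =>
    ⟨fun hp => funext fun x => hp.1.apply_eq_zero (by omega), fun hp => ?_⟩⟩
  subst hp
  exact ⟨.of_injOn (by omega) (by omega) (fun _ _ => rfl), fun P Q => by simp⟩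

lemma ncard_smoothPerms_succ (n : ℕ) :
    (smoothPerms (n + 1)).ncard = (smoothPerms n).ncard +
      ∑ k ∈ Finset.range n, (smoothPerms (k + 1)).ncard * (smoothPerms (n - k)).ncard := by
  rw [ncard_smoothPerms_eq_sum (by omega), Finset.sum_range_succ', ncard_firstClass_zero,
    add_comm]
  refine congrArg _ (Finset.sum_congr rfl fun k hk => ?_)
  have hk := Finset.mem_range.1 hk
  rw [show n + 1 = (k + 1) + (n - k) by omega, ncard_firstClass (by omega) (by omega)]

lemma ncard_smoothPerms_eq_schroeder (r : ℕ → ℕ) (h0 : r 0 = 1)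
    (hrec : ∀ n, 1 ≤ n → r n = r (n - 1) + ∑ k ∈ Finset.range n, r k * r (n - 1 - k)) (n : ℕ) :
    (smoothPerms (n + 1)).ncard = r n := by
  induction n using Nat.strong_induction_on with
  | _ n ih =>
    cases n with
    | zero => simp [ncard_smoothPerms_succ 0, ncard_smoothPerms_zero, h0]
    | succ n =>
      rw [ncard_smoothPerms_succ, hrec _ (by omega), Nat.add_sub_cancel, ih n (by omega)]
      refine congrArg _ (Finset.sum_congr rfl fun k hk => ?_)
      have hk := Finset.mem_range.1 hk
      rw [ih k (by omega), show n + 1 - k = n - k + 1 by omega, ih (n - k) (by omega)]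

def swapEnds (m t : ℕ) : ℕ := if t = 1 then m else if t = m then 1 else t

lemma swapEnds_swapEnds (m t : ℕ) : swapEnds m (swapEnds m t) = t := by
  unfold swapEnds
  split_ifs <;> omega

lemma swapEnds_comp_mem_smoothPerms {m : ℕ} (hm : 1 ≤ m) {p : ℕ → ℕ} (hp : p ∈ smoothPerms m) :
    swapEnds m ∘ p ∈ smoothPerms m := by
  obtain ⟨hperm, hsmooth⟩ := hp
  refine ⟨.of_injOn (fun x hx hxm => ?_) (fun x y hx hxm hy hym hxy => ?_) (fun x hx => ?_), ?_⟩
  · have := hperm.apply_mem_Icc hx hxm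
    simp only [Function.comp, swapEnds]
    split_ifs <;> omega
  · have := congrArg (swapEnds m) hxy
    simp only [Function.comp, swapEnds_swapEnds] at this
    exact hperm.inj hx hxm hy hym this
  · simp only [Function.comp, swapEnds, hperm.apply_eq_zero hx]
    rw [if_neg (by omega), if_neg (by omega)]
  · rintro P Q ⟨h1, h2, h3⟩
    have := hperm.apply_le P
    have := hperm.apply_le Q
    have := hperm.apply_eq_zero (x := P)
    have := hperm.apply_eq_zero (x := Q)
    have := hsmooth P Q
    simp only [Function.comp, swapEnds] at h1 h2 h3
    split_ifs at h1 h2 h3 <;> omega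

lemma Set.Finite.ncard_eq_two_mul_ncard_sep {α : Type*} {S : Set α} (hS : S.Finite) {f : α → α}
    (hf : ∀ x ∈ S, f x ∈ S) (hff : ∀ x ∈ S, f (f x) = x) {P : α → Prop}
    (hP : ∀ x ∈ S, P (f x) ↔ ¬ P x) : S.ncard = 2 * {x ∈ S | P x}.ncard := by
  have himage : S \ {x ∈ S | P x} = f '' {x ∈ S | P x} := by
    ext x
    constructor
    · rintro ⟨hx, hPx⟩
      exact ⟨f x, ⟨hf x hx, (hP x hx).2 fun h => hPx ⟨hx, h⟩⟩, hff x hx⟩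
    · rintro ⟨y, ⟨hy, hPy⟩, rfl⟩
      exact ⟨hf y hy, fun h => (hP y hy).1 h.2 hPy⟩
  have hinj : Set.InjOn f {x ∈ S | P x} := fun x hx y hy hxy => by
    rw [← hff x hx.1, hxy, hff y hy.1]
  rw [← Set.ncard_sdiff_add_ncard_of_subset (Set.sep_subset S P) hS, himage, hinj.ncard_image]
  ring

def MaxBeforeOne (m : ℕ) (p : ℕ → ℕ) : Prop :=
  ∃ x y, 1 ≤ x ∧ x ≤ m ∧ 1 ≤ y ∧ y ≤ m ∧ p x = m ∧ p y = 1 ∧ x < y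

lemma PermOn.maxBeforeOne_iff {m : ℕ} {p : ℕ → ℕ} (hp : PermOn m p) {a b : ℕ} (ha : 1 ≤ a)
    (ham : a ≤ m) (hpa : p a = m) (hb : 1 ≤ b) (hbm : b ≤ m) (hpb : p b = 1) :
    MaxBeforeOne m p ↔ a < b := by
  refine ⟨fun ⟨x, y, hx, hxm, hy, hym, hpx, hpy, hxy⟩ => ?_,
    fun hab => ⟨a, b, ha, ham, hb, hbm, hpa, hpb, hab⟩⟩
  rwa [hp.inj ha ham hx hxm (hpa.trans hpx.symm), hp.inj hb hbm hy hym (hpb.trans hpy.symm)]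

lemma maxBeforeOne_swapEnds_comp_iff {m : ℕ} (hm : 2 ≤ m) {p : ℕ → ℕ} (hp : p ∈ smoothPerms m) :
    MaxBeforeOne m (swapEnds m ∘ p) ↔ ¬ MaxBeforeOne m p := by
  obtain ⟨a, ha, ham, hpa⟩ := hp.1.exists_apply_eq (y := m) (by omega) le_rfl
  obtain ⟨b, hb, hbm, hpb⟩ := hp.1.exists_apply_eq (y := 1) le_rfl (by omega)
  have hab : a ≠ b := by
    rintro rfl
    omega
  have hswap := (swapEnds_comp_mem_smoothPerms (by omega) hp).1
  rw [hp.1.maxBeforeOne_iff ha ham hpa hb hbm hpb,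
    hswap.maxBeforeOne_iff hb hbm (by simp [swapEnds, hpb]) ha ham (by simp [swapEnds, hpa])]
  omega

/-- The number of permutations of `{1, ..., n+1}` satisfying the smoothness condition is
the large Schröder number `r n`, and the number of those with `π⁻¹(n+1) < π⁻¹(1)` is
the small Schröder number `r n / 2`. -/
theorem stmt_9 (r : ℕ → ℕ) (h0 : r 0 = 1)
    (hrec : ∀ n, 1 ≤ n → r n = r (n - 1) + ∑ k ∈ Finset.range n, r k * r (n - 1 - k)) :
    (∀ n, Set.ncard {p : ℕ → ℕ | GoodPerm n p} = r n) ∧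
    (∀ n, 1 ≤ n → Set.ncard {p : ℕ → ℕ | GoodPerm n p ∧
      ∃ x y, 1 ≤ x ∧ x ≤ n + 1 ∧ 1 ≤ y ∧ y ≤ n + 1 ∧
        p x = n + 1 ∧ p y = 1 ∧ x < y} = r n / 2) := by
  have hgood (n : ℕ) : {p : ℕ → ℕ | GoodPerm n p} = smoothPerms (n + 1) :=
    Set.ext fun _ => goodPerm_iff_mem_smoothPerms
  refine ⟨fun n => by rw [hgood, ncard_smoothPerms_eq_schroeder r h0 hrec], fun n hn => ?_⟩
  have hhalf := (smoothPerms_finite (n + 1)).ncard_eq_two_mul_ncard_sep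
    (fun p hp => swapEnds_comp_mem_smoothPerms (by omega) hp)
    (fun p _ => funext fun x => swapEnds_swapEnds (n + 1) (p x))
    (fun p hp => maxBeforeOne_swapEnds_comp_iff (by omega) hp)
  have hsep : {p : ℕ → ℕ | GoodPerm n p ∧ MaxBeforeOne (n + 1) p} =
      {p ∈ smoothPerms (n + 1) | MaxBeforeOne (n + 1) p} :=
    Set.ext fun _ => and_congr_left' goodPerm_iff_mem_smoothPerms
  rw [ncard_smoothPerms_eq_schroeder r h0 hrec] at hhalf
  rw [hhalf, ← hsep, Nat.mul_div_cancel_left _ two_pos]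
  rfl
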